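/- arXiv:0801.0170 — 3 statements merged into one kernel-verified Lean document; each statement's English description precedes it below -/
import Mathlib

section
/- Every regular space X with π-character πχ(X) ≤ κ and infinite density d(X) = λ has a Shapirovskii π-base: there exist a dense left-separated subset P = {p_α : α < λ} and open sets S = {S_{α,i} : α < λ, i < κ} such that (a) {S_{α,i} : i < κ} is a local π-base at p_α; (b) cl(P_α) ∩ ∪{cl(S_{β,i}) : α ≤ β < λ, i < κ} = ∅ for each α; (c) for every δ of the form κ·ε and every finite A ⊆ [γ(δ),δ) × κ, if ∩_{a∈A} cl(S_a) ≠ ∅ then ∩_{a∈A} cl(S_a) ∩ cl(P_δ) ≠ ∅, where γ is the regressive function of the canonical κ-function. -/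
open Cardinal Set

/-- `ℬ` is a local π-base at `x`: a family of nonempty open sets such that
every open neighbourhood of `x` contains a member. -/
def IsLocalPiBase {X : Type u} [TopologicalSpace X] (x : X) (ℬ : Set (Set X)) : Prop :=
  (∀ B ∈ ℬ, IsOpen B ∧ B.Nonempty) ∧
  ∀ U : Set X, IsOpen U → x ∈ U → ∃ B ∈ ℬ, B ⊆ U

/-- The π-character of a space: the supremum over points of the least size
of a local π-base. -/
noncomputable def piChar (X : Type u) [TopologicalSpace X] : Cardinal.{u} :=
  ⨆ x : X, sInf {c : Cardinal | ∃ ℬ : Set (Set X), #ℬ = c ∧ IsLocalPiBase x ℬ}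

/-- The density of a topological space. -/
noncomputable def density (X : Type u) [TopologicalSpace X] : Cardinal.{u} :=
  sInf {c : Cardinal | ∃ s : Set X, Dense s ∧ #s = c}

/-!
The points `p_α` and the π-bases `S_{α,·}` are built by transfinite recursion. Fewer than `d(X)`
points are never dense, so `p_α` can be taken outside `cl P_α`; regularity gives a closed
neighbourhood of `p_α` missing `cl P_α`, and a local π-base of size `κ` inside it yields
left-separation and (b). Density comes from stages reserved for an enumeration of a dense set.

For (c), `γ δ` is the point from which all final segments of `δ` have the same, minimal,
cardinality `μ ≥ κ`. A finite `A` is served on behalf of the least level `δ` at which it is due, at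
a stage `α` between its coordinates and `δ`, where `p_α` is put into `⋂_{a ∈ A} cl S_a` unless
`cl P_α` already meets that set. Levels competing for the stages of one `ω`-block have strictly
decreasing `γ`, hence are finitely many, and Cantor pairing on the finite parts splits the block
among them. Each level then owns at most `μ` tasks and, above any of them, at least `μ` stages, so
a greedy transfinite choice assigns distinct stages.
-/

open Ordinal Topology Function

universe u

theorem WellFounded.exists_forall_rec {ι β : Type*} {r : ι → ι → Prop} (hr : WellFounded r)
    {R : (i : ι) → ({j // r j i} → β) → β → Prop} (h : ∀ i g, ∃ b, R i g b) :
    ∃ F : ι → β, ∀ i, R i (fun j => F j) (F i) := by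
  choose step hstep using h
  refine ⟨hr.fix fun i rec => step i fun j => rec j j.2, fun i => ?_⟩
  rw [hr.fix_eq]
  exact hstep _ _

/-- Greedy choice along a well-order of type `(#ι).ord`: fewer than `#ι` values are taken before
any given `i`. -/
theorem exists_injective_forall_mem {ι α : Type u} (t : ι → Set α) (ht : ∀ i, #ι ≤ #(t i)) :
    ∃ f : ι → α, Injective f ∧ ∀ i, f i ∈ t i := by
  obtain ⟨r, _, hr⟩ := exists_ord_eq ι
  have step : ∀ i (g : {j // r j i} → α), ∃ a, a ∈ t i ∧ a ∉ range g := by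
    intro i g
    by_contra! h
    exact (card_typein_lt i hr).not_ge
      ((ht i).trans ((mk_le_mk_of_subset h).trans mk_range_le))
  obtain ⟨f, hf⟩ := (IsWellFounded.wf : WellFounded r).exists_forall_rec step
  refine ⟨f, fun i j hij => ?_, fun i => (hf i).1⟩
  rcases trichotomous_of r i j with h | h | h
  · exact absurd ⟨⟨i, h⟩, hij⟩ (hf j).2
  · exact h
  · exact absurd ⟨⟨j, h⟩, hij.symm⟩ (hf i).2

theorem Set.finite_of_strictAntiOn {α β : Type*} [LinearOrder α] [WellFoundedLT α] [Preorder β]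
    [WellFoundedLT β] {f : α → β} {s : Set α} (hf : StrictAntiOn f s) : s.Finite := by
  have : WellFoundedGT s := StrictAnti.wellFoundedGT (f := fun x : s => f x)
    fun x y hxy => hf x.2 y.2 hxy
  have := Finite.of_wellFoundedLT_wellFoundedGT s
  exact s.toFinite

theorem Set.Finite.strictMonoOn_ncard_inter_Iio {α : Type*} [LinearOrder α] {s : Set α}
    (hs : s.Finite) : StrictMonoOn (fun x => (s ∩ Iio x).ncard) s := by
  intro x hx y _ hxy
  refine ncard_lt_ncard ⟨inter_subset_inter_right _ (Iio_subset_Iio hxy.le), fun h => ?_⟩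
    (hs.subset inter_subset_left)
  exact lt_irrefl x (h ⟨hx, hxy⟩).2

theorem exists_surjOn_Iio_ord {α : Type u} {s : Set α} {κ : Cardinal.{u}} (hs : s.Nonempty)
    (h : #s ≤ κ) : ∃ f : Ordinal.{u} → α, (∀ i, f i ∈ s) ∧ SurjOn f (Iio κ.ord) s := by
  classical
  obtain ⟨e⟩ : Nonempty (s ↪ Iio κ.ord) := by
    rw [← lift_mk_le', Cardinal.mk_Iio_ordinal, card_ord, Cardinal.lift_lift]
    exact Cardinal.lift_le.2 h
  refine ⟨fun i => if h : ∃ a : s, (e a : Ordinal) = i then h.choose else hs.some,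
    fun i => ?_, fun a ha => ⟨e ⟨a, ha⟩, (e ⟨a, ha⟩).2, ?_⟩⟩
  · dsimp only
    split_ifs with h
    exacts [h.choose.2, hs.some_mem]
  · have h : ∃ b : s, (e b : Ordinal) = e ⟨a, ha⟩ := ⟨_, rfl⟩
    simp only [dif_pos h, e.injective (Subtype.ext h.choose_spec)]

theorem mk_range_lt_of_lt_ord {β : Type u} {α : Ordinal.{u}} {c : Cardinal.{u}}
    (f : Iio α → β) (hα : α < c.ord) : #(range f) < c := by
  have h := mk_range_le_lift (f := f)
  rw [Cardinal.mk_Iio_ordinal, Cardinal.lift_lift, Cardinal.lift_le] at h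
  exact h.trans_lt (lt_ord.1 hα)

namespace Ordinal

theorem omega0_dvd_ord {κ : Cardinal.{u}} (hκ : ℵ₀ ≤ κ) : ω ∣ κ.ord :=
  isSuccPrelimit_iff_omega0_dvd.1 (isSuccLimit_ord hκ).isSuccPrelimit

theorem add_natCast_lt_of_omega0_dvd {α δ : Ordinal} (hδ : ω ∣ δ) (hα : α < δ) (n : ℕ) :
    α + n < δ := by
  induction n with
  | zero => simpa
  | succ n ih =>
    rw [Nat.cast_succ, ← add_assoc, ← Order.succ_eq_add_one]
    exact (isSuccPrelimit_iff_omega0_dvd.2 hδ).succ_lt ih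

theorem sub_le_sub_left_of_le {a b : Ordinal} (h : a ≤ b) (c : Ordinal) : c - b ≤ c - a :=
  Ordinal.sub_le.2 ((le_add_sub c a).trans (add_le_add_left h _))

theorem mk_Ico_le (a b : Ordinal.{u}) : #(Ico a b) ≤ Cardinal.lift.{u + 1} (b - a).card := by
  rw [← Cardinal.mk_Iio_ordinal]
  refine (mk_le_mk_of_subset (t := (a + ·) '' Iio (b - a)) fun x hx =>
    ⟨x - a, ?_, Ordinal.add_sub_cancel_of_le hx.1⟩).trans mk_image_le
  rw [mem_Iio, lt_sub, Ordinal.add_sub_cancel_of_le hx.1]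
  exact hx.2

theorem le_card_sub_of_dvd {κ : Cardinal.{u}} (hκ : ℵ₀ ≤ κ) {δ ξ : Ordinal.{u}}
    (hδ : κ.ord ∣ δ) (hξ : ξ < δ) : κ ≤ (δ - ξ).card := by
  obtain ⟨e, rfl⟩ := hδ
  have hK : κ.ord ≠ 0 := (ord_pos.2 (aleph0_pos.trans_le hκ)).ne'
  have : ξ + κ.ord ≤ κ.ord * e := calc
    ξ + κ.ord = κ.ord * (ξ / κ.ord) + (ξ % κ.ord + κ.ord) := by rw [← add_assoc, div_add_mod]
    _ = κ.ord * (ξ / κ.ord + 1) := by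
      rw [isPrincipal_add_iff_add_left_eq_self.1 (isPrincipal_add_ord hκ) _ (mod_lt ξ hK),
        mul_add_one]
    _ ≤ κ.ord * e := mul_le_mul_right (Order.add_one_le_of_lt ((lt_mul_iff_div_lt hK).1 hξ)) _
  simpa using card_le_card (le_sub_of_add_le this)

end Ordinal

namespace Shapirovskii

noncomputable def minTailCard (δ : Ordinal.{u}) : Cardinal.{u} :=
  ⨅ ξ : Iio δ, (δ - ξ).card

/-- The regressive function `γ`: from `tailStart δ` on, every final segment of `δ` has the minimal
cardinality `minTailCard δ`. -/
noncomputable def tailStart (δ : Ordinal.{u}) : Ordinal.{u} :=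
  sInf {ξ | ξ < δ ∧ (δ - ξ).card = minTailCard δ}

theorem tailStart_spec {δ : Ordinal.{u}} (h : 0 < δ) :
    tailStart δ < δ ∧ (δ - tailStart δ).card = minTailCard δ := by
  have : Nonempty (Iio δ) := ⟨⟨0, h⟩⟩
  obtain ⟨ξ, hξ⟩ := ciInf_mem fun ξ : Iio δ => (δ - ξ).card
  exact csInf_mem (s := {ξ | ξ < δ ∧ (δ - ξ).card = minTailCard δ}) ⟨ξ.1, ξ.2, hξ⟩

theorem tailStart_lt {δ : Ordinal.{u}} (h : 0 < δ) : tailStart δ < δ :=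
  (tailStart_spec h).1

theorem card_sub_eq_minTailCard {δ ξ : Ordinal.{u}} (h₁ : tailStart δ ≤ ξ) (h₂ : ξ < δ) :
    (δ - ξ).card = minTailCard δ := by
  refine le_antisymm ?_ (ciInf_le' _ (⟨ξ, h₂⟩ : Iio δ))
  rw [← (tailStart_spec (zero_le.trans_lt h₂)).2]
  exact card_le_card (sub_le_sub_left_of_le h₁ δ)

theorem le_minTailCard {κ : Cardinal.{u}} (hκ : ℵ₀ ≤ κ) {δ : Ordinal.{u}} (hδ : κ.ord ∣ δ)
    (h : 0 < δ) : κ ≤ minTailCard δ :=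
  have : Nonempty (Iio δ) := ⟨⟨0, h⟩⟩
  le_ciInf fun ξ => le_card_sub_of_dvd hκ hδ ξ.2

section Schedule

variable (κ : Cardinal.{u})

structure IsDueAt (A : Finset (Ordinal.{u} × Ordinal.{u})) (δ : Ordinal.{u}) : Prop where
  dvd : κ.ord ∣ δ
  bounds : ∀ a ∈ A, tailStart δ ≤ a.1 ∧ a.1 < δ

/-- A task is served on behalf of the least level at which it is due. -/
structure Owns (δ : Ordinal.{u}) (A : Finset (Ordinal.{u} × Ordinal.{u})) : Prop where
  nonempty : A.Nonempty
  snd_lt : ∀ a ∈ A, a.2 < κ.ord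
  isLeast : IsLeast {δ' | IsDueAt κ A δ'} δ

/-- The levels that may claim stages in the block `[ω * q, ω * (q + 1))`. -/
def activeLevels (q : Ordinal.{u}) : Set Ordinal.{u} :=
  {δ | ω * q < δ ∧ ∃ A, Owns κ δ A ∧ ∀ a ∈ A, a.1 < ω * (q + 1)}

variable {κ}

theorem Owns.pos {δ : Ordinal.{u}} {A : Finset (Ordinal.{u} × Ordinal.{u})} (h : Owns κ δ A) :
    0 < δ :=
  zero_le.trans_lt (h.isLeast.1.bounds _ h.nonempty.choose_spec).2

theorem tailStart_strictAntiOn_activeLevels (hκ : ℵ₀ ≤ κ) (q : Ordinal.{u}) :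
    StrictAntiOn tailStart (activeLevels κ q) := by
  rintro δ₁ ⟨hq, A₁, hA₁, -⟩ δ₂ ⟨-, A₂, hA₂, hA₂q⟩ hlt
  have hdvd := hA₁.isLeast.1.dvd
  have hblock : ω * (q + 1) ≤ δ₁ := by
    obtain ⟨m, rfl⟩ := (omega0_dvd_ord hκ).trans hdvd
    exact mul_le_mul_right (Order.add_one_le_of_lt (lt_of_mul_lt_mul_left' hq)) _
  -- `A₂` lies below `δ₁` but is not due there, since `δ₂` is its least due level.
  obtain ⟨a, ha, hlt'⟩ : ∃ a ∈ A₂, a.1 < tailStart δ₁ := by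
    by_contra! h
    exact hlt.not_ge (hA₂.isLeast.2 ⟨hdvd, fun a ha => ⟨h a ha, (hA₂q a ha).trans_le hblock⟩⟩)
  exact (hA₂.isLeast.1.bounds a ha).1.trans_lt hlt'

variable (κ) in
noncomputable def levelRank (q δ : Ordinal.{u}) : ℕ :=
  (activeLevels κ q ∩ Iio δ).ncard

theorem levelRank_injOn (hκ : ℵ₀ ≤ κ) (q : Ordinal.{u}) :
    InjOn (levelRank κ q) (activeLevels κ q) :=
  (finite_of_strictAntiOn (tailStart_strictAntiOn_activeLevels hκ q)).strictMonoOn_ncard_inter_Iio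
    |>.injOn

theorem mem_activeLevels {δ α : Ordinal.{u}} {A : Finset (Ordinal.{u} × Ordinal.{u})}
    (hA : Owns κ δ A) (hAα : ∀ a ∈ A, a.1 < α) (hαδ : α < δ) : δ ∈ activeLevels κ (α / ω) := by
  refine ⟨(mul_div_le α ω).trans_lt hαδ, A, hA, fun a ha => (hAα a ha).trans ?_⟩
  simpa using lt_mul_succ_div α omega0_ne_zero

/-- `α % ω` as a natural number. -/
noncomputable def natRem (α : Ordinal.{u}) : ℕ :=
  Cardinal.toNat (α % ω).card

theorem natCast_natRem (α : Ordinal.{u}) : (natRem α : Ordinal) = α % ω := by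
  obtain ⟨n, hn⟩ := lt_omega0.1 (mod_lt α omega0_ne_zero)
  rw [natRem, hn, card_nat, toNat_natCast]

/-- Moves `α` up inside its `ω`-block, recording the tag `r` in the finite part. -/
noncomputable def tagStage (r : ℕ) (α : Ordinal.{u}) : Ordinal.{u} :=
  ω * (α / ω) + (Nat.pair r (natRem α) + 1 : ℕ)

theorem tagStage_div_omega0 (r : ℕ) (α : Ordinal.{u}) : tagStage r α / ω = α / ω := by
  rw [tagStage, mul_add_div _ omega0_ne_zero, div_eq_zero_of_lt (natCast_lt_omega0 _), add_zero]

theorem tagStage_mod_omega0 (r : ℕ) (α : Ordinal.{u}) :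
    tagStage r α % ω = (Nat.pair r (natRem α) + 1 : ℕ) := by
  rw [tagStage, mul_add_mod_self, mod_eq_of_lt (natCast_lt_omega0 _)]

theorem le_tagStage (r : ℕ) (α : Ordinal.{u}) : α ≤ tagStage r α := by
  conv_lhs => rw [← div_add_mod α ω, ← natCast_natRem]
  have : natRem α ≤ Nat.pair r (natRem α) + 1 := (Nat.right_le_pair _ _).trans (Nat.le_succ _)
  exact add_le_add_right (Nat.cast_le.2 this) _

theorem tagStage_lt {r : ℕ} {α δ : Ordinal.{u}} (hδ : ω ∣ δ) (hα : α < δ) : tagStage r α < δ :=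
  add_natCast_lt_of_omega0_dvd hδ ((mul_div_le α ω).trans_lt hα) _

theorem eq_of_tagStage_eq {r r' : ℕ} {α α' : Ordinal.{u}} (h : tagStage r α = tagStage r' α') :
    α = α' := by
  have hdiv : α / ω = α' / ω := by rw [← tagStage_div_omega0 r, h, tagStage_div_omega0]
  have hpair := tagStage_mod_omega0 r α
  rw [h, tagStage_mod_omega0, Nat.cast_inj, Nat.add_right_cancel_iff] at hpair
  rw [← div_add_mod α ω, ← div_add_mod α' ω, ← natCast_natRem, ← natCast_natRem, hdiv,
    (Nat.pair_eq_pair.1 hpair).2]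

variable (κ) in
/-- Stage `ω * q + n` is reserved for the active level of rank `r` in block `q` when
`n = pair r m + 1`; the stages `ω * q` are left for density. -/
def reservedStages (δ : Ordinal.{u}) : Set Ordinal.{u} :=
  {α | δ ∈ activeLevels κ (α / ω) ∧ ∃ m : ℕ, α % ω = (Nat.pair (levelRank κ (α / ω) δ) m + 1 : ℕ)}

theorem eq_of_mem_reservedStages (hκ : ℵ₀ ≤ κ) {α δ₁ δ₂ : Ordinal.{u}}
    (h₁ : α ∈ reservedStages κ δ₁) (h₂ : α ∈ reservedStages κ δ₂) : δ₁ = δ₂ := by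
  obtain ⟨hδ₁, m₁, hm₁⟩ := h₁
  obtain ⟨hδ₂, m₂, hm₂⟩ := h₂
  rw [hm₁, Nat.cast_inj, Nat.add_right_cancel_iff, Nat.pair_eq_pair] at hm₂
  exact levelRank_injOn hκ _ hδ₁ hδ₂ hm₂.1

theorem mod_omega0_ne_zero_of_mem_reservedStages {α δ : Ordinal.{u}}
    (h : α ∈ reservedStages κ δ) : α % ω ≠ 0 := by
  obtain ⟨-, m, hm⟩ := h
  rw [hm]
  exact Nat.cast_ne_zero.2 (Nat.succ_ne_zero _)

theorem tagStage_mem_reservedStages {α δ : Ordinal.{u}} (h : δ ∈ activeLevels κ (α / ω)) :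
    tagStage (levelRank κ (α / ω) δ) α ∈ reservedStages κ δ :=
  ⟨by rwa [tagStage_div_omega0], natRem α, by rw [tagStage_mod_omega0, tagStage_div_omega0]⟩

theorem lift_minTailCard_le_mk_reservedStages (hκ : ℵ₀ ≤ κ) {δ : Ordinal.{u}}
    {A : Finset (Ordinal.{u} × Ordinal.{u})} (hA : Owns κ δ A) :
    Cardinal.lift.{u + 1} (minTailCard δ) ≤ #↥(reservedStages κ δ ∩ Ioo (A.sup Prod.fst) δ) := by
  set m := A.sup Prod.fst
  obtain ⟨a₀, ha₀⟩ := hA.nonempty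
  obtain ⟨hdvd, hdue⟩ := hA.isLeast.1
  have hω : ω ∣ δ := (omega0_dvd_ord hκ).trans hdvd
  have hm : m < δ := (Finset.sup_lt_iff hA.pos).2 fun a ha => (hdue a ha).2
  have hm₁ : m + 1 < δ := by exact_mod_cast add_natCast_lt_of_omega0_dvd hω hm 1
  have hstage : ∀ ξ : Iio (δ - (m + 1)), m < m + 1 + ξ ∧ m + 1 + ξ < δ := fun ξ =>
    ⟨(lt_add_one m).trans_le le_self_add, lt_sub.1 ξ.2⟩
  let f : Iio (δ - (m + 1)) → ↥(reservedStages κ δ ∩ Ioo m δ) := fun ξ =>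
    ⟨tagStage (levelRank κ ((m + 1 + ξ) / ω) δ) (m + 1 + ξ),
      tagStage_mem_reservedStages (mem_activeLevels hA
        (fun a ha => (Finset.le_sup ha).trans_lt (hstage ξ).1) (hstage ξ).2),
      (hstage ξ).1.trans_le (le_tagStage _ _), tagStage_lt hω (hstage ξ).2⟩
  have hf : Injective f := fun ξ ζ h =>
    Subtype.ext (add_left_cancel (eq_of_tagStage_eq (congrArg Subtype.val h :)))
  rw [← card_sub_eq_minTailCard (((hdue a₀ ha₀).1.trans (Finset.le_sup ha₀)).trans le_self_add)
    hm₁, ← Cardinal.mk_Iio_ordinal]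
  exact mk_le_of_injective hf

theorem mk_owns_le (hκ : ℵ₀ ≤ κ) {δ : Ordinal.{u}} (hδ : κ.ord ∣ δ) (h : 0 < δ) :
    #{A // Owns κ δ A} ≤ Cardinal.lift.{u + 1} (minTailCard δ) := by
  classical
  set s : Set (Ordinal.{u} × Ordinal.{u}) := Ico (tailStart δ) δ ×ˢ Iio κ.ord
  have hμ := le_minTailCard hκ hδ h
  have hs : #s ≤ Cardinal.lift.{u + 1} (minTailCard δ) := calc
    #s = #(Ico (tailStart δ) δ) * #(Iio κ.ord) := by
      rw [Cardinal.mk_congr (Equiv.Set.prod _ _), mk_prod, Cardinal.lift_id, Cardinal.lift_id]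
    _ ≤ Cardinal.lift.{u + 1} (minTailCard δ) * Cardinal.lift.{u + 1} κ := by
      rw [Cardinal.mk_Iio_ordinal, card_ord, ← (tailStart_spec h).2]
      gcongr
      exact mk_Ico_le _ _
    _ = Cardinal.lift.{u + 1} (minTailCard δ) := by
      rw [← Cardinal.lift_mul, mul_eq_left (hκ.trans hμ) hμ (aleph0_pos.trans_le hκ).ne']
  have hmem : ∀ A : {A // Owns κ δ A}, ∀ x ∈ A.1, x ∈ s := fun A x hx =>
    ⟨A.2.isLeast.1.bounds x hx, A.2.snd_lt x hx⟩
  have hinj : Injective fun A : {A // Owns κ δ A} => A.1.subtype (· ∈ s) := fun A B h => by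
    rw [← Subtype.coe_inj, ← Finset.subtype_map_of_mem (hmem A),
      ← Finset.subtype_map_of_mem (hmem B)]
    exact congrArg _ h
  calc #{A // Owns κ δ A} ≤ #(Finset s) := mk_le_of_injective hinj
    _ ≤ #(List s) := mk_le_of_surjective List.toFinset_surjective
    _ ≤ max ℵ₀ #s := mk_list_le_max _
    _ ≤ Cardinal.lift.{u + 1} (minTailCard δ) :=
      max_le (by simpa using hκ.trans hμ) hs

theorem exists_taskSchedule (hκ : ℵ₀ ≤ κ) :
    ∃ T : Ordinal.{u} → Finset (Ordinal.{u} × Ordinal.{u}), ∀ δ, κ.ord ∣ δ →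
      ∀ A : Finset (Ordinal.{u} × Ordinal.{u}), A.Nonempty →
        (∀ a ∈ A, tailStart δ ≤ a.1 ∧ a.1 < δ ∧ a.2 < κ.ord) →
        ∃ α < δ, (∀ a ∈ A, a.1 < α) ∧ T α = A ∧ α % ω ≠ 0 := by
  have hlevel : ∀ δ, ∃ g : {A // Owns κ δ A} → Ordinal.{u}, Injective g ∧
      ∀ A, g A ∈ reservedStages κ δ ∩ Ioo (A.1.sup Prod.fst) δ := fun δ =>
    exists_injective_forall_mem _ fun A =>
      (mk_owns_le hκ A.2.isLeast.1.dvd A.2.pos).trans (lift_minTailCard_le_mk_reservedStages hκ A.2)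
  choose g hg_inj hg_mem using hlevel
  let G : {p : Ordinal.{u} × Finset (Ordinal.{u} × Ordinal.{u}) // Owns κ p.1 p.2} → Ordinal.{u} :=
    fun p => g p.1.1 ⟨p.1.2, p.2⟩
  have hG : Injective G := by
    rintro ⟨⟨δ₁, A₁⟩, h₁⟩ ⟨⟨δ₂, A₂⟩, h₂⟩ h
    have h' : g δ₁ ⟨A₁, h₁⟩ = g δ₂ ⟨A₂, h₂⟩ := h
    obtain rfl : δ₁ = δ₂ :=
      eq_of_mem_reservedStages hκ (hg_mem δ₁ ⟨A₁, h₁⟩).1 (h' ▸ (hg_mem δ₂ ⟨A₂, h₂⟩).1)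
    cases hg_inj δ₁ h
    rfl
  refine ⟨extend G (fun p => p.1.2) fun _ => ∅, fun δ hδ A hA hAδ => ?_⟩
  have hdue : IsDueAt κ A δ := ⟨hδ, fun a ha => ⟨(hAδ a ha).1, (hAδ a ha).2.1⟩⟩
  have hown : Owns κ (sInf {δ' | IsDueAt κ A δ'}) A :=
    ⟨hA, fun a ha => (hAδ a ha).2.2, isLeast_csInf ⟨δ, hdue⟩⟩
  obtain ⟨hres, hAα, hαδ⟩ := hg_mem _ ⟨A, hown⟩
  exact ⟨G ⟨(_, A), hown⟩, hαδ.trans_le (hown.isLeast.2 hdue),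
    fun a ha => (Finset.le_sup ha).trans_lt hAα, hG.extend_apply _ _ _,
    mod_omega0_ne_zero_of_mem_reservedStages hres⟩

end Schedule

end Shapirovskii

section PiBase

variable {X : Type u} [TopologicalSpace X]

theorem IsLocalPiBase.sep_subset {x : X} {ℬ : Set (Set X)} (h : IsLocalPiBase x ℬ) {N : Set X}
    (hN : N ∈ 𝓝 x) : IsLocalPiBase x {B ∈ ℬ | B ⊆ N} := by
  refine ⟨fun B hB => h.1 B hB.1, fun U hU hxU => ?_⟩
  obtain ⟨B, hB, hBU⟩ :=
    h.2 (U ∩ interior N) (hU.inter isOpen_interior) ⟨hxU, mem_interior_iff_mem_nhds.2 hN⟩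
  exact ⟨B, ⟨hB, hBU.trans (inter_subset_right.trans interior_subset)⟩,
    hBU.trans inter_subset_left⟩

theorem exists_isLocalPiBase_mk_le {κ : Cardinal.{u}} (hπ : piChar X ≤ κ) (x : X) :
    ∃ ℬ : Set (Set X), #ℬ ≤ κ ∧ IsLocalPiBase x ℬ := by
  have hne : {c | ∃ ℬ : Set (Set X), #ℬ = c ∧ IsLocalPiBase x ℬ}.Nonempty :=
    ⟨_, {B | IsOpen B ∧ B.Nonempty}, rfl, fun B hB => hB,
      fun U hU hxU => ⟨U, ⟨hU, x, hxU⟩, subset_rfl⟩⟩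
  obtain ⟨ℬ, hℬ, hxℬ⟩ := csInf_mem hne
  exact ⟨ℬ, hℬ ▸ (le_ciSup Cardinal.bddAbove_of_small x).trans hπ, hxℬ⟩

theorem exists_isLocalPiBase_indexed {κ : Cardinal.{u}} (hπ : piChar X ≤ κ) {x : X} {N : Set X}
    (hN : N ∈ 𝓝 x) :
    ∃ S : Ordinal.{u} → Set X, (∀ i, S i ⊆ N) ∧ IsLocalPiBase x {B | ∃ i < κ.ord, B = S i} := by
  obtain ⟨ℬ, hcard, hℬ⟩ := exists_isLocalPiBase_mk_le hπ x
  have hℬN := hℬ.sep_subset hN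
  obtain ⟨B, hB, -⟩ := hℬN.2 univ isOpen_univ trivial
  obtain ⟨S, hS, hSsurj⟩ :=
    exists_surjOn_Iio_ord ⟨B, hB⟩ ((mk_le_mk_of_subset (sep_subset _ _)).trans hcard)
  have hrange : {B | ∃ i < κ.ord, B = S i} = {B ∈ ℬ | B ⊆ N} := by
    ext B
    constructor
    · rintro ⟨i, -, rfl⟩
      exact hS i
    · intro hB
      obtain ⟨i, hi, rfl⟩ := hSsurj hB
      exact ⟨i, hi, rfl⟩
  exact ⟨S, fun i => (hS i).2, hrange ▸ hℬN⟩

theorem not_dense_of_mk_lt_density {s : Set X} (h : #s < density X) : ¬Dense s := fun hs =>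
  h.not_ge (csInf_le' ⟨s, hs, rfl⟩)

theorem exists_dense_range_of_density_eq {lam : Cardinal.{u}} (hd : density X = lam) :
    ∃ d : Iio lam.ord → X, Dense (range d) := by
  obtain ⟨s, hs, hcard⟩ :=
    csInf_mem (⟨_, univ, dense_univ, rfl⟩ : {c | ∃ s : Set X, Dense s ∧ #s = c}.Nonempty)
  obtain ⟨e⟩ : Nonempty (Iio lam.ord ≃ s) := by
    rw [← Cardinal.lift_mk_eq', Cardinal.mk_Iio_ordinal, card_ord, Cardinal.lift_lift, ← hd]
    exact congrArg _ hcard.symm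
  refine ⟨fun ξ => e ξ, ?_⟩
  rwa [← comp_def, e.surjective.range_comp, Subtype.range_coe]

end PiBase

namespace Shapirovskii

theorem range_fst_eq_image {Y Z : Type*} (F : Ordinal.{u} → Y × Z) (α : Ordinal.{u}) :
    (range fun β : Iio α => (F β).1) = (Prod.fst ∘ F) '' Iio α :=
  (image_eq_range (Prod.fst ∘ F) (Iio α)).symm

section Construction

variable {X : Type u} [TopologicalSpace X] {κ lam : Cardinal.{u}}

/-- The stage at which the `ξ`-th point of the dense set is taken care of. When `lam ≤ κ`
no task needs a stage, so every stage may serve density. -/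
noncomputable def densityStage (κ lam : Cardinal.{u}) (ξ : Ordinal.{u}) : Ordinal.{u} :=
  if lam ≤ κ then ξ else ω * ξ

theorem densityStage_injective : Injective (densityStage κ lam) := by
  intro ξ ζ h
  unfold densityStage at h
  split_ifs at h
  · exact h
  · exact mul_left_cancel₀ omega0_ne_zero h

theorem densityStage_lt (hκ : ℵ₀ ≤ κ) (hlam : ℵ₀ ≤ lam) {ξ : Ordinal.{u}} (hξ : ξ < lam.ord) :
    densityStage κ lam ξ < lam.ord := by
  unfold densityStage
  split_ifs with h
  · exact hξ
  · rw [lt_ord, card_mul, card_omega0]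
    exact mul_lt_of_lt hlam (hκ.trans_lt (not_le.1 h)) (lt_ord.1 hξ)

theorem densityStage_mod_omega0 (h : κ < lam) (ξ : Ordinal.{u}) :
    densityStage κ lam ξ % ω = 0 := by
  rw [densityStage, if_neg h.not_ge, mul_mod]

variable (κ lam) (d : Iio lam.ord → X) (T : Ordinal.{u} → Finset (Ordinal.{u} × Ordinal.{u}))

/-- `⋂_{a ∈ T α} cl S_a`, computed from the earlier stages (coordinates `a.1 ≥ α` are dropped). -/
def taskTarget (α : Ordinal.{u}) (prev : Iio α → X × (Ordinal.{u} → Set X)) : Set X :=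
  ⋂ a ∈ T α, ⋂ h : a.1 < α, closure ((prev ⟨a.1, h⟩).2 a.2)

/-- `v` is `(p_α, S_{α,·})` and `prev` holds the earlier stages. -/
def IsGoodStep (α : Ordinal.{u}) (prev : Iio α → X × (Ordinal.{u} → Set X))
    (v : X × (Ordinal.{u} → Set X)) : Prop :=
  (∀ ξ : Iio lam.ord, densityStage κ lam ξ = α →
    d ξ ∉ closure (range fun β => (prev β).1) → v.1 = d ξ) ∧
  ((∀ ξ : Iio lam.ord, densityStage κ lam ξ ≠ α) →
    (taskTarget T α prev \ closure (range fun β => (prev β).1)).Nonempty →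
    v.1 ∈ taskTarget T α prev) ∧
  ∃ N, IsClosed N ∧ v.1 ∈ N ∧ Disjoint N (closure (range fun β => (prev β).1)) ∧
    (∀ i, v.2 i ⊆ N) ∧ IsLocalPiBase v.1 {B | ∃ i < κ.ord, B = v.2 i}

theorem exists_isGoodStep [RegularSpace X] (hπ : piChar X ≤ κ) (hd : density X = lam)
    {α : Ordinal.{u}} (hα : α < lam.ord) (prev : Iio α → X × (Ordinal.{u} → Set X)) :
    ∃ v, IsGoodStep κ lam d T α prev v := by
  set P := range fun β => (prev β).1
  obtain ⟨x₀, hx₀⟩ : ∃ x, x ∉ closure P := not_forall.1 <|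
    not_dense_of_mk_lt_density (hd ▸ mk_range_lt_of_lt_ord _ hα)
  obtain ⟨x, hxP, hxd, hxT⟩ : ∃ x ∉ closure P,
      (∀ ξ : Iio lam.ord, densityStage κ lam ξ = α → d ξ ∉ closure P → x = d ξ) ∧
      ((∀ ξ : Iio lam.ord, densityStage κ lam ξ ≠ α) →
        (taskTarget T α prev \ closure P).Nonempty → x ∈ taskTarget T α prev) := by
    by_cases hξ : ∃ ξ : Iio lam.ord, densityStage κ lam ξ = α ∧ d ξ ∉ closure P
    · obtain ⟨ξ, hξα, hξP⟩ := hξ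
      refine ⟨d ξ, hξP, fun ζ hζ _ => ?_, fun h => absurd hξα (h ξ)⟩
      rw [Subtype.ext (densityStage_injective (hζ.trans hξα.symm))]
    push Not at hξ
    by_cases hW : (taskTarget T α prev \ closure P).Nonempty
    · obtain ⟨x, hxW, hxP⟩ := hW
      exact ⟨x, hxP, fun ξ hξα hξP => absurd (hξ ξ hξα) hξP, fun _ _ => hxW⟩
    · exact ⟨x₀, hx₀, fun ξ hξα hξP => absurd (hξ ξ hξα) hξP, fun _ h => absurd h hW⟩
  obtain ⟨N, hN, hNc, hNP⟩ :=
    exists_mem_nhds_isClosed_subset (isClosed_closure.isOpen_compl.mem_nhds hxP)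
  obtain ⟨S, hSN, hS⟩ := exists_isLocalPiBase_indexed hπ hN
  exact ⟨(x, S), hxd, hxT, N, hNc, mem_of_mem_nhds hN, subset_compl_iff_disjoint_right.1 hNP,
    hSN, hS⟩

def IsGoodConstruction (F : Ordinal.{u} → X × (Ordinal.{u} → Set X)) : Prop :=
  ∀ α < lam.ord, IsGoodStep κ lam d T α (fun β => F β) (F α)

variable {κ lam d T} {F : Ordinal.{u} → X × (Ordinal.{u} → Set X)}


theorem IsGoodConstruction.exists_closed_nhd (hF : IsGoodConstruction κ lam d T F) {α : Ordinal.{u}}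
    (hα : α < lam.ord) : ∃ N, IsClosed N ∧ (F α).1 ∈ N ∧
      Disjoint N (closure ((Prod.fst ∘ F) '' Iio α)) ∧ ∀ i, (F α).2 i ⊆ N := by
  obtain ⟨-, -, N, hNc, hxN, hNP, hSN, -⟩ := hF α hα
  rw [range_fst_eq_image] at hNP
  exact ⟨N, hNc, hxN, hNP, hSN⟩

theorem IsGoodConstruction.isLocalPiBase (hF : IsGoodConstruction κ lam d T F) {α : Ordinal.{u}}
    (hα : α < lam.ord) : IsLocalPiBase (F α).1 {B | ∃ i < κ.ord, B = (F α).2 i} := by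
  obtain ⟨-, -, -, -, -, -, -, h⟩ := hF α hα
  exact h

theorem IsGoodConstruction.closure_inter_image_Ico (hF : IsGoodConstruction κ lam d T F)
    (δ : Ordinal.{u}) :
    closure ((Prod.fst ∘ F) '' Iio δ) ∩ (Prod.fst ∘ F) '' Ico δ lam.ord = ∅ := by
  rw [eq_empty_iff_forall_notMem]
  rintro _ ⟨hx, β, ⟨hδβ, hβ⟩, rfl⟩
  obtain ⟨N, -, hN, hNP, -⟩ := hF.exists_closed_nhd hβ
  exact hNP.notMem_of_mem_left hN (closure_mono (image_mono (Iio_subset_Iio hδβ)) hx)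

theorem IsGoodConstruction.closure_inter_iUnion_closure (hF : IsGoodConstruction κ lam d T F)
    (α : Ordinal.{u}) :
    closure ((Prod.fst ∘ F) '' Iio α) ∩
      (⋃ β ∈ Ico α lam.ord, ⋃ i ∈ Iio κ.ord, closure ((F β).2 i)) = ∅ := by
  rw [eq_empty_iff_forall_notMem]
  rintro x ⟨hx, hxS⟩
  simp only [mem_iUnion] at hxS
  obtain ⟨β, ⟨hαβ, hβ⟩, i, -, hxi⟩ := hxS
  obtain ⟨N, hNc, -, hNP, hSN⟩ := hF.exists_closed_nhd hβ
  exact hNP.notMem_of_mem_left (closure_minimal (hSN i) hNc hxi)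
    (closure_mono (image_mono (Iio_subset_Iio hαβ)) hx)

theorem IsGoodConstruction.dense (hF : IsGoodConstruction κ lam d T F) (hκ : ℵ₀ ≤ κ)
    (hlam : ℵ₀ ≤ lam) (hd : Dense (range d)) : Dense ((Prod.fst ∘ F) '' Iio lam.ord) := by
  refine dense_closure.1 (hd.mono (range_subset_iff.2 fun ξ => ?_))
  have hα := densityStage_lt hκ hlam ξ.2
  by_cases h : d ξ ∈ closure ((Prod.fst ∘ F) '' Iio (densityStage κ lam ξ))
  · exact closure_mono (image_mono (Iio_subset_Iio hα.le)) h
  · rw [← (hF _ hα).1 ξ rfl (by rwa [range_fst_eq_image])]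
    exact subset_closure ⟨_, hα, rfl⟩

theorem taskTarget_eq {α : Ordinal.{u}} (h : ∀ a ∈ T α, a.1 < α) :
    taskTarget T α (fun β => F β) = ⋂ a ∈ T α, closure ((F a.1).2 a.2) :=
  iInter₂_congr fun a ha => iInf_pos (h a ha)

theorem IsGoodConstruction.inter_closure_nonempty (hF : IsGoodConstruction κ lam d T F)
    (hT : ∀ δ, κ.ord ∣ δ → ∀ A : Finset (Ordinal.{u} × Ordinal.{u}), A.Nonempty →
      (∀ a ∈ A, tailStart δ ≤ a.1 ∧ a.1 < δ ∧ a.2 < κ.ord) →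
      ∃ α < δ, (∀ a ∈ A, a.1 < α) ∧ T α = A ∧ α % ω ≠ 0)
    (hdense : Dense ((Prod.fst ∘ F) '' Iio lam.ord)) {δ : Ordinal.{u}} (hδ : κ.ord ∣ δ)
    (h0 : δ ≠ 0) (hδlam : δ ≤ lam.ord) {A : Finset (Ordinal.{u} × Ordinal.{u})}
    (hA : ∀ a ∈ A, tailStart δ ≤ a.1 ∧ a.1 < δ ∧ a.2 < κ.ord)
    (hW : (⋂ a ∈ A, closure ((F a.1).2 a.2)).Nonempty) :
    ((⋂ a ∈ A, closure ((F a.1).2 a.2)) ∩ closure ((Prod.fst ∘ F) '' Iio δ)).Nonempty := by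
  obtain ⟨y, hy⟩ := hW
  obtain rfl | hδlam := hδlam.eq_or_lt
  · exact ⟨y, hy, hdense y⟩
  obtain rfl | hAne := A.eq_empty_or_nonempty
  · exact ⟨(F 0).1, by simp, subset_closure ⟨0, pos_iff_ne_zero.2 h0, rfl⟩⟩
  obtain ⟨α, hαδ, hAα, rfl, hα⟩ := hT δ hδ A hAne hA
  have hκlam : κ < lam := ord_lt_ord.1 ((Ordinal.le_of_dvd h0 hδ).trans_lt hδlam)
  have hstage : ∀ ξ : Iio lam.ord, densityStage κ lam ξ ≠ α := fun ξ h =>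
    hα (h ▸ densityStage_mod_omega0 hκlam ξ)
  have hsub : closure ((Prod.fst ∘ F) '' Iio α) ⊆ closure ((Prod.fst ∘ F) '' Iio δ) :=
    closure_mono (image_mono (Iio_subset_Iio hαδ.le))
  by_cases hfresh : ((⋂ a ∈ T α, closure ((F a.1).2 a.2)) \
      closure ((Prod.fst ∘ F) '' Iio α)).Nonempty
  · have hpα := (hF α (hαδ.trans hδlam)).2.1 hstage
      (by rwa [taskTarget_eq hAα, range_fst_eq_image])
    rw [taskTarget_eq hAα] at hpα
    exact ⟨(F α).1, hpα, subset_closure ⟨α, hαδ, rfl⟩⟩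
  · exact ⟨y, hy, hsub (sdiff_eq_empty.1 (not_nonempty_iff_eq_empty.1 hfresh) hy)⟩

end Construction

end Shapirovskii

/-- Every regular space `X` with `πχ(X) ≤ κ` and infinite density `λ` has a
Shapirovskii π-base: a regressive `γ`, a dense left-separated enumeration
`⟨p_α : α < λ⟩` and open sets `S_{α,i}` (`α < λ`, `i < κ`) such that
(a) `{S_{α,i} : i < κ}` is a local π-base at `p_α`;
(b) `cl {p_β : β < α}` misses every `cl S_{β,i}` with `β ≥ α`;
(c) for every nonzero `δ = κ·ε` (with `δ ≤ λ`) and every finite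
`A ⊆ [γ δ, δ) × κ`, if `⋂_{a ∈ A} cl S_a ≠ ∅` then it meets `cl {p_α : α < δ}`. -/
theorem exists_shapirovskii_pi_base (X : Type u) [TopologicalSpace X] [T3Space X]
    (κ lam : Cardinal.{u}) (hκ : ℵ₀ ≤ κ)
    (hπ : piChar X ≤ κ) (hlam : ℵ₀ ≤ lam) (hd : density X = lam) :
    ∃ (γ : Ordinal.{u} → Ordinal.{u}) (p : Ordinal.{u} → X)
      (S : Ordinal.{u} → Ordinal.{u} → Set X),
      (∀ δ : Ordinal, 0 < δ → γ δ < δ) ∧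
      Dense (p '' Set.Iio lam.ord) ∧
      (∀ δ < lam.ord, closure (p '' Set.Iio δ) ∩ (p '' Set.Ico δ lam.ord) = ∅) ∧
      (∀ α < lam.ord, IsLocalPiBase (p α) {B : Set X | ∃ i < κ.ord, B = S α i}) ∧
      (∀ α < lam.ord,
        closure (p '' Set.Iio α) ∩
          (⋃ β ∈ Set.Ico α lam.ord, ⋃ i ∈ Set.Iio κ.ord, closure (S β i)) = ∅) ∧
      (∀ ε δ : Ordinal, δ = κ.ord * ε → δ ≠ 0 → δ ≤ lam.ord →
        ∀ A : Finset (Ordinal × Ordinal),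
          (∀ a ∈ A, γ δ ≤ a.1 ∧ a.1 < δ ∧ a.2 < κ.ord) →
          (⋂ a ∈ A, closure (S a.1 a.2)).Nonempty →
          ((⋂ a ∈ A, closure (S a.1 a.2)) ∩ closure (p '' Set.Iio δ)).Nonempty) := by
  obtain ⟨d, hd_dense⟩ := exists_dense_range_of_density_eq hd
  have : Nonempty X := ⟨d ⟨0, ord_pos.2 (aleph0_pos.trans_le hlam)⟩⟩
  obtain ⟨T, hT⟩ := Shapirovskii.exists_taskSchedule hκ
  obtain ⟨F, hF⟩ := wellFounded_lt.exists_forall_rec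
    (R := fun α prev v => α < lam.ord → Shapirovskii.IsGoodStep κ lam d T α prev v)
    fun α prev => by
      by_cases hα : α < lam.ord
      · obtain ⟨v, hv⟩ := Shapirovskii.exists_isGoodStep κ lam d T hπ hd hα prev
        exact ⟨v, fun _ => hv⟩
      · exact ⟨Classical.arbitrary _, fun h => absurd h hα⟩
  have hF : Shapirovskii.IsGoodConstruction κ lam d T F := fun α hα => hF α hα
  have hdense := hF.dense hκ hlam hd_dense
  exact ⟨Shapirovskii.tailStart, Prod.fst ∘ F, fun α => (F α).2,
    fun _ => Shapirovskii.tailStart_lt, hdense,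
    fun δ _ => hF.closure_inter_image_Ico δ, fun _ => hF.isLocalPiBase,
    fun α _ => hF.closure_inter_iUnion_closure α,
    fun ε _ hε h0 hδ _ hA hW => hF.inter_closure_nonempty hT hdense ⟨ε, hε⟩ h0 hδ hA hW⟩
end

section
/- Let X be a regular initially κ-compact space with πχ(X) = κ and no free sequences of length κ⁺. Then any Shapirovskii π-base S for X is point-κ: every point of X belongs to at most κ members of S; equivalently, any subfamily R ⊆ S with |R| = κ⁺ has empty intersection. -/
open Cardinal Set

def IsFreeSeq {X : Type u} [TopologicalSpace X] (μ : Ordinal.{u}) (p : Ordinal.{u} → X) : Prop :=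
  ∀ δ < μ, closure (p '' Set.Iio δ) ∩ closure (p '' Set.Ico δ μ) = ∅

def InitiallyCompact (X : Type u) [TopologicalSpace X] (κ : Cardinal.{u}) : Prop :=
  ∀ 𝒰 : Set (Set X), (∀ U ∈ 𝒰, IsOpen U) → #𝒰 ≤ κ → ⋃₀ 𝒰 = Set.univ →
    ∃ 𝒱 ⊆ 𝒰, 𝒱.Finite ∧ ⋃₀ 𝒱 = Set.univ

/-!
Suppose a point `x` lies in more than `κ` of the sets `S_{α,i}` and let `T` be the set of their
first indices, so `|T| > κ`. Cut `T` at the least `σ` with `|T ∩ σ| > κ`; then `cf σ > κ`, and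
pressing down the regressive `γ` along an `ω`-sequence of multiples of `κ` gives `β₀ < σ` with
`γ δ ≤ β₀` for cofinally many multiples `δ < σ` of `κ`. Recursively choose, for `ξ < κ⁺`,
`β₀ < α_ξ < δ_ξ < σ` with `α_ξ ∈ T` above all earlier `δ_ζ` and `δ_ξ` such a multiple. Since `x`
lies in every `S_{α_ζ}`, condition (c) and initial `κ`-compactness give a point
`q_ξ ∈ cl P_{δ_ξ} ∩ ⋂_{ζ ≤ ξ} cl S_{α_ζ}`, and by (b) the `q_ξ` form a free sequence of length `κ⁺`.
-/

universe v

open Ordinal Order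

theorem InitiallyCompact.iInter_nonempty {X : Type u} [TopologicalSpace X] {κ : Cardinal.{u}}
    (h : InitiallyCompact X κ) {ι : Type v} {F : ι → Set X} (hF : ∀ i, IsClosed (F i))
    (hι : Cardinal.lift.{u} #ι ≤ Cardinal.lift.{v} κ)
    (hfin : ∀ s : Finset ι, (⋂ i ∈ s, F i).Nonempty) : (⋂ i, F i).Nonempty := by
  by_contra hempty
  have hcover : ⋃₀ range (fun i => (F i)ᶜ) = Set.univ := by
    rw [sUnion_range, ← compl_iInter, not_nonempty_iff_eq_empty.mp hempty, compl_empty]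
  obtain ⟨𝒱, h𝒱, h𝒱fin, h𝒱cover⟩ := h _ (by rintro _ ⟨i, rfl⟩; exact (hF i).isOpen_compl)
    (Cardinal.lift_le.mp (Cardinal.mk_range_le_lift.trans hι)) hcover
  rw [← image_univ] at h𝒱
  obtain ⟨t, -, htfin, htcover⟩ :=
    exists_subset_image_finite_and (p := fun 𝒲 => ⋃₀ 𝒲 = Set.univ) |>.mp
      ⟨𝒱, h𝒱, h𝒱fin, h𝒱cover⟩
  obtain ⟨y, hy⟩ := hfin htfin.toFinset
  obtain ⟨_, ⟨i, hi, rfl⟩, hyi⟩ := htcover.symm ▸ Set.mem_univ y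
  exact hyi (mem_iInter₂.mp hy i (htfin.mem_toFinset.mpr hi))

theorem Ordinal.card_le_of_lt_ord_succ {κ : Cardinal.{u}} {ξ : Ordinal.{u}}
    (hξ : ξ < (succ κ).ord) : ξ.card ≤ κ :=
  Order.lt_succ_iff.mp (Cardinal.lt_ord.mp hξ)

theorem Ordinal.mk_Iic_le_of_lt_ord_succ {κ : Cardinal.{u}} (hκ : ℵ₀ ≤ κ) {ξ : Ordinal.{u}}
    (hξ : ξ < (succ κ).ord) : #(Iic ξ) ≤ Cardinal.lift.{u + 1} κ := by
  have hsucc : succ ξ < (succ κ).ord :=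
    (Cardinal.isSuccLimit_ord (hκ.trans (Order.le_succ κ))).succ_lt hξ
  rw [← Order.Iio_succ, Cardinal.mk_Iio_ordinal, Cardinal.lift_le]
  exact card_le_of_lt_ord_succ hsucc

theorem InitiallyCompact.exists_isFreeSeq {X : Type u} [TopologicalSpace X] {κ : Cardinal.{u}}
    (hcomp : InitiallyCompact X κ) (hκ : ℵ₀ ≤ κ) {P : Ordinal.{u} → Set X} (hP : Monotone P)
    (hPclosed : ∀ δ, IsClosed (P δ)) {U : Ordinal.{u} → Set X} {a d : Ordinal.{u} → Ordinal.{u}}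
    (hmeet : ∀ ξ < (succ κ).ord, ∀ s : Finset (Iic ξ),
      ((⋂ ζ ∈ s, closure (U ζ)) ∩ P (d ξ)).Nonempty)
    (hsep : ∀ ξ < (succ κ).ord, Disjoint (P (a ξ)) (closure (U ξ)))
    (hda : ∀ ξ < (succ κ).ord, ∀ ζ < ξ, d ζ ≤ a ξ) :
    ∃ q : Ordinal.{u} → X, IsFreeSeq (succ κ).ord q := by
  have hpoint : ∀ ξ < (succ κ).ord, ∃ y, y ∈ P (d ξ) ∧ ∀ ζ ≤ ξ, y ∈ closure (U ζ) := by
    intro ξ hξ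
    obtain ⟨y, hy⟩ := hcomp.iInter_nonempty (F := fun ζ : Iic ξ => closure (U ζ) ∩ P (d ξ))
      (fun _ => isClosed_closure.inter (hPclosed _))
      (by rw [Cardinal.lift_id'.{u, u + 1}]; exact Ordinal.mk_Iic_le_of_lt_ord_succ hκ hξ)
      (fun s => (hmeet ξ hξ s).mono fun _ hy => mem_iInter₂.mpr fun ζ hζ =>
        ⟨mem_iInter₂.mp hy.1 ζ hζ, hy.2⟩)
    rw [mem_iInter] at hy
    exact ⟨y, (hy ⟨ξ, self_mem_Iic⟩).2, fun ζ hζ => (hy ⟨ζ, hζ⟩).1⟩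
  have : Nonempty X := let ⟨y, _⟩ := hpoint 0 (Cardinal.ord_pos.mpr (Cardinal.succ_pos κ)); ⟨y⟩
  choose! q hqP hqU using hpoint
  refine ⟨q, fun c hc => (hsep c hc).mono ?_ ?_ |>.eq_bot⟩
  · refine closure_minimal ?_ (hPclosed _)
    rintro _ ⟨ζ, hζ, rfl⟩
    exact hP (hda c hc ζ hζ) (hqP ζ (hζ.trans hc))
  · refine closure_minimal ?_ isClosed_closure
    rintro _ ⟨ζ, hζ, rfl⟩
    exact hqU ζ hζ.2 c hζ.1

theorem Cardinal.lt_mk_image_fst {α β : Type v} {W : Set (α × β)} {c : Cardinal.{v}}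
    (hc : ℵ₀ ≤ c) (hsnd : #(Prod.snd '' W) ≤ c) (hW : c < #W) : c < #(Prod.fst '' W) := by
  by_contra! hfst
  refine hW.not_ge ?_
  calc #W ≤ #((Prod.fst '' W) ×ˢ (Prod.snd '' W)) :=
        mk_le_mk_of_subset subset_fst_image_prod_snd_image
    _ = #(Prod.fst '' W) * #(Prod.snd '' W) := mk_setProd _ _
    _ ≤ c * c := mul_le_mul' hfst hsnd
    _ = c := mul_eq_self hc

theorem Ordinal.mk_inter_Iio_le_of_cof_le {κ : Cardinal.{u}} (hκ : ℵ₀ ≤ κ) {T : Set Ordinal.{u}}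
    {σ : Ordinal.{u}} (hcof : σ.cof ≤ κ)
    (hT : ∀ b < σ, #(T ∩ Iic b : Set _) ≤ Cardinal.lift.{u + 1} κ) :
    #(T ∩ Iio σ : Set _) ≤ Cardinal.lift.{u + 1} κ := by
  obtain ⟨f, hf⟩ := exists_isFundamentalSeq (o := σ) rfl
  have hcover : T ∩ Iio σ ⊆ ⋃ i, T ∩ Iic (f i : Ordinal) := by
    rintro t ⟨ht, htσ⟩
    obtain ⟨_, ⟨i, rfl⟩, hi⟩ := hf.isCofinal_range ⟨t, htσ⟩
    exact mem_iUnion.mpr ⟨i, ht, hi⟩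
  calc #(T ∩ Iio σ : Set _) ≤ #(⋃ i, T ∩ Iic (f i : Ordinal)) := mk_le_mk_of_subset hcover
    _ ≤ #(Iio σ.cof.ord) * ⨆ i, #(T ∩ Iic (f i : Ordinal) : Set _) := mk_iUnion_le _
    _ ≤ Cardinal.lift.{u + 1} κ * Cardinal.lift.{u + 1} κ := by
      refine mul_le_mul' ?_ (ciSup_le' fun i => hT _ (f i).2)
      rw [Cardinal.mk_Iio_ordinal, card_ord, Cardinal.lift_le]
      exact hcof
    _ = Cardinal.lift.{u + 1} κ := mul_eq_self (aleph0_le_lift.mpr hκ)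

theorem Ordinal.exists_lt_cof_of_lift_lt_mk {κ : Cardinal.{u}} (hκ : ℵ₀ ≤ κ)
    {T : Set Ordinal.{u}} (hT : Cardinal.lift.{u + 1} κ < #T) {L : Ordinal.{u}} (hTL : T ⊆ Iio L) :
    ∃ σ ≤ L, κ < σ.cof ∧ ∀ b < σ, ∃ t ∈ T, b < t ∧ t < σ := by
  have hκ' : ℵ₀ ≤ Cardinal.lift.{u + 1} κ := aleph0_le_lift.mpr hκ
  set Big := {σ : Ordinal.{u} | Cardinal.lift.{u + 1} κ < #(T ∩ Iio σ : Set _)}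
  have hL : L ∈ Big := by simpa [Big, inter_eq_self_of_subset_left hTL] using hT
  set σ := sInf Big
  have hσ : σ ∈ Big := csInf_mem ⟨L, hL⟩
  have hmin : ∀ b < σ, #(T ∩ Iio b : Set _) ≤ Cardinal.lift.{u + 1} κ := fun b hb =>
    not_lt.mp (show b ∉ Big from notMem_of_lt_csInf hb (OrderBot.bddBelow _))
  have hsmall : ∀ b < σ, #(T ∩ Iic b : Set _) ≤ Cardinal.lift.{u + 1} κ := fun b hb =>
    calc #(T ∩ Iic b : Set _) ≤ #(insert b (T ∩ Iio b) : Set _) :=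
          mk_le_mk_of_subset fun t ⟨ht, htb⟩ => htb.eq_or_lt.imp id (⟨ht, ·⟩)
      _ ≤ #(T ∩ Iio b : Set _) + 1 := mk_insert_le
      _ ≤ Cardinal.lift.{u + 1} κ + Cardinal.lift.{u + 1} κ :=
          add_le_add (hmin b hb) (one_le_aleph0.trans hκ')
      _ = Cardinal.lift.{u + 1} κ := add_eq_self hκ'
  refine ⟨σ, csInf_le' hL, lt_of_not_ge fun hcof =>
    hσ.not_ge (mk_inter_Iio_le_of_cof_le hκ hcof hsmall), fun b hb => ?_⟩
  by_contra! hbound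
  have hsub : T ∩ Iio σ ⊆ T ∩ Iic b := fun t ⟨ht, htσ⟩ =>
    ⟨ht, le_of_not_gt fun hbt => (hbound t ht hbt).not_gt htσ⟩
  exact hσ.not_ge ((mk_le_mk_of_subset hsub).trans (hsmall b hb))

theorem Ordinal.exists_mul_mem_Ioo_of_card_lt_cof {o σ b : Ordinal.{u}} (ho : o ≠ 0)
    (hσ : o.card < σ.cof) (hb : b < σ) : ∃ ε, b < o * ε ∧ o * ε < σ := by
  have hbo : b + o < σ := by
    by_contra! hσbo
    have hpos : σ - b ≠ 0 := Ordinal.sub_ne_zero_iff_lt.mpr hb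
    have hcof : σ.cof = (σ - b).cof := by
      rw [← cof_add b hpos, Ordinal.add_sub_cancel_of_le hb.le]
    refine hσ.not_ge (hcof ▸ (cof_le_card _).trans (card_le_card ?_))
    exact Ordinal.sub_le.mpr hσbo
  refine ⟨succ (b / o), lt_mul_succ_div b ho, ?_⟩
  calc o * succ (b / o) = o * (b / o) + o := mul_succ _ _
    _ ≤ b + o := add_le_add_left (mul_div_le b o) o
    _ < σ := hbo

theorem Ordinal.exists_frequently_le_of_regressive {σ : Ordinal.{u}} (hσ : ℵ₀ < σ.cof)
    {f : Ordinal.{u} → Ordinal.{u}} (hf : IsNormal f) (hfσ : ∀ b < σ, ∃ ε, b < f ε ∧ f ε < σ)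
    {γ : Ordinal.{u} → Ordinal.{u}} (hγ : ∀ δ, 0 < δ → γ δ < δ) :
    ∃ β < σ, ∀ b < σ, ∃ ε, b < f ε ∧ f ε < σ ∧ γ (f ε) ≤ β := by
  by_contra! hnot
  choose! F hFσ hF using hnot
  have hnext : ∀ b < σ, ∃ ε, max b (F b) < f ε ∧ f ε < σ := fun b hb =>
    hfσ _ (max_lt hb (hFσ b hb))
  choose! next hnext_gt hnext_lt using hnext
  have hσ0 : 0 < σ := cof_pos.mp (aleph0_pos.trans hσ)
  let e : ℕ → Ordinal.{u} := fun n => Nat.rec (next 0) (fun _ ε => next (f ε)) n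
  have he_lt : ∀ n, f (e n) < σ := by
    intro n
    induction n with
    | zero => exact hnext_lt 0 hσ0
    | succ n ih => exact hnext_lt _ ih
  have he_succ : ∀ n, max (f (e n)) (F (f (e n))) < f (e (n + 1)) := fun n =>
    hnext_gt _ (he_lt n)
  set E := ⨆ n, e n
  have hfE : f E = ⨆ n, f (e n) := hf.map_iSup bddAbove_of_small
  have hbdd : BddAbove (range fun n => f (e n)) := bddAbove_of_small
  have hfE_lt : f E < σ := hfE ▸ lift_iSup_lt_of_lt_cof (by simpa using hσ) he_lt
  have hfE_pos : 0 < f E := ((le_max_left _ _).trans_lt (hnext_gt 0 hσ0)).trans_le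
    (hf.strictMono.monotone (le_ciSup bddAbove_of_small 0))
  obtain ⟨n, hn⟩ := (lt_ciSup_iff hbdd).mp (hfE ▸ hγ _ hfE_pos : γ (f E) < ⨆ n, f (e n))
  have hFE : F (f (e n)) < f E :=
    ((le_max_right _ _).trans_lt (he_succ n)).trans_le (hfE ▸ le_ciSup hbdd (n + 1))
  exact (hF _ (he_lt n) E hFE hfE_lt).not_gt hn

theorem Ordinal.exists_seq_le_of_lt_cof {σ : Ordinal.{u}} {κ : Cardinal.{u}} (hσ : κ < σ.cof)
    {f : Ordinal.{u} → Ordinal.{u}} (hf : ∀ b < σ, f b < σ) :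
    ∃ b : Ordinal.{u} → Ordinal.{u}, ∀ ξ, ξ.card ≤ κ → b ξ < σ ∧ ∀ ζ < ξ, f (b ζ) ≤ b ξ := by
  let b : Ordinal.{u} → Ordinal.{u} := lt_wf.fix fun ξ ih => ⨆ ζ : Iio ξ, f (ih ζ ζ.2)
  have hb : ∀ ξ, b ξ = ⨆ ζ : Iio ξ, f (b ζ) := lt_wf.fix_eq _
  refine ⟨b, fun ξ => ?_⟩
  induction ξ using WellFoundedLT.induction with
  | _ ξ ih =>
    intro hξ
    have hlt : ∀ ζ : Iio ξ, f (b ζ) < σ := fun ζ =>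
      hf _ (ih ζ ζ.2 ((card_le_card ζ.2.le).trans hξ)).1
    have hbdd : BddAbove (range fun ζ : Iio ξ => f (b ζ)) := ⟨σ, by
      rintro _ ⟨ζ, rfl⟩; exact (hlt ζ).le⟩
    rw [hb]
    refine ⟨lift_iSup_lt_of_lt_cof ?_ hlt, fun ζ hζ => le_ciSup hbdd ⟨ζ, hζ⟩⟩
    rw [Cardinal.mk_Iio_ordinal, Cardinal.lift_lift, ← lift_cof, Cardinal.lift_lt]
    exact hξ.trans_lt hσ

theorem Ordinal.exists_interleaved_seq {κ : Cardinal.{u}} (hκ : ℵ₀ ≤ κ) {T : Set Ordinal.{u}}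
    (hT : Cardinal.lift.{u + 1} κ < #T) {L : Ordinal.{u}} (hTL : T ⊆ Iio L)
    {γ : Ordinal.{u} → Ordinal.{u}} (hγ : ∀ δ, 0 < δ → γ δ < δ) :
    ∃ a d : Ordinal.{u} → Ordinal.{u}, ∀ ξ < (succ κ).ord,
      a ξ ∈ T ∧ d ξ ≤ L ∧ (∃ ε, d ξ = κ.ord * ε) ∧ (∀ ζ < ξ, d ζ ≤ a ξ) ∧
      ∀ ζ ≤ ξ, γ (d ξ) ≤ a ζ ∧ a ζ < d ξ := by
  obtain ⟨σ, hσL, hcof, hTσ⟩ := exists_lt_cof_of_lift_lt_mk hκ hT hTL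
  have hκord : 0 < κ.ord := Cardinal.ord_pos.mpr (aleph0_pos.trans_le hκ)
  obtain ⟨β, hβσ, hβ⟩ := exists_frequently_le_of_regressive (hκ.trans_lt hcof)
    (isNormal_mul_right hκord)
    (fun b hb => exists_mul_mem_Ioo_of_card_lt_cof hκord.ne' (by rwa [card_ord]) hb) hγ
  have hpick : ∀ b < σ, ∃ t δ, t ∈ T ∧ max b β < t ∧ t < δ ∧ δ < σ ∧
      (∃ ε, δ = κ.ord * ε) ∧ γ δ ≤ β := by
    intro b hb
    obtain ⟨t, ht, hbt, htσ⟩ := hTσ _ (max_lt hb hβσ)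
    obtain ⟨ε, htε, hεσ, hγε⟩ := hβ t htσ
    exact ⟨t, _, ht, hbt, htε, hεσ, ⟨ε, rfl⟩, hγε⟩
  choose! t δ ht hbt htδ hδσ hδ hγδ using hpick
  obtain ⟨b, hb⟩ := exists_seq_le_of_lt_cof hcof hδσ
  have hbσ : ∀ ξ < (succ κ).ord, b ξ < σ := fun ξ hξ => (hb ξ (card_le_of_lt_ord_succ hξ)).1
  refine ⟨t ∘ b, δ ∘ b, fun ξ hξ => ?_⟩
  have hda : ∀ ζ < ξ, δ (b ζ) ≤ t (b ξ) := fun ζ hζ =>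
    ((hb ξ (card_le_of_lt_ord_succ hξ)).2 ζ hζ).trans
      ((le_max_left _ _).trans (hbt _ (hbσ ξ hξ)).le)
  refine ⟨ht _ (hbσ ξ hξ), (hδσ _ (hbσ ξ hξ)).le.trans hσL, hδ _ (hbσ ξ hξ), hda,
    fun ζ hζ => ⟨?_, ?_⟩⟩
  · exact (hγδ _ (hbσ ξ hξ)).trans
      ((le_max_right _ _).trans (hbt _ (hbσ ζ (hζ.trans_lt hξ))).le)
  · rcases hζ.lt_or_eq with hlt | rfl
    · exact (htδ _ (hbσ ζ (hlt.trans hξ))).trans_le ((hda ζ hlt).trans (htδ _ (hbσ ξ hξ)).le)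
    · exact htδ _ (hbσ ζ hξ)

theorem biInter_closure_inter_nonempty_of_mem {X : Type u} [TopologicalSpace X]
    {κ lam : Cardinal.{u}} {γ : Ordinal.{u} → Ordinal.{u}} {p : Ordinal.{u} → X}
    {S : Ordinal.{u} → Ordinal.{u} → Set X}
    (hc : ∀ ε δ : Ordinal, δ = κ.ord * ε → δ ≠ 0 → δ ≤ lam.ord →
      ∀ A : Finset (Ordinal × Ordinal),
        (∀ a ∈ A, γ δ ≤ a.1 ∧ a.1 < δ ∧ a.2 < κ.ord) →
        (⋂ a ∈ A, closure (S a.1 a.2)).Nonempty →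
        ((⋂ a ∈ A, closure (S a.1 a.2)) ∩ closure (p '' Set.Iio δ)).Nonempty)
    {δ : Ordinal.{u}} (hδ : ∃ ε, δ = κ.ord * ε) (hδ0 : δ ≠ 0) (hδL : δ ≤ lam.ord) {x : X}
    {ι : Type*} [DecidableEq ι] (s : Finset ι) (f : ι → Ordinal.{u} × Ordinal.{u})
    (hf : ∀ ζ ∈ s, γ δ ≤ (f ζ).1 ∧ (f ζ).1 < δ ∧ (f ζ).2 < κ.ord ∧ x ∈ S (f ζ).1 (f ζ).2) :
    ((⋂ ζ ∈ s, closure (S (f ζ).1 (f ζ).2)) ∩ closure (p '' Iio δ)).Nonempty := by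
  obtain ⟨ε, hε⟩ := hδ
  have hA : ∀ a ∈ s.image f, γ δ ≤ a.1 ∧ a.1 < δ ∧ a.2 < κ.ord := by
    simp only [Finset.forall_mem_image]
    exact fun ζ hζ => ⟨(hf ζ hζ).1, (hf ζ hζ).2.1, (hf ζ hζ).2.2.1⟩
  have hx : x ∈ ⋂ a ∈ s.image f, closure (S a.1 a.2) := by
    rw [Finset.set_biInter_finset_image]
    exact mem_iInter₂.mpr fun ζ hζ => subset_closure (hf ζ hζ).2.2.2
  simpa only [Finset.set_biInter_finset_image] using hc ε δ hε hδ0 hδL _ hA ⟨x, hx⟩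

theorem shapirovskii_pi_base_point_kappa_general (X : Type u) [TopologicalSpace X]
    (κ : Cardinal.{u}) (hκ : ℵ₀ ≤ κ)
    (hcomp : InitiallyCompact X κ)
    (hfree : ¬ ∃ p : Ordinal.{u} → X, IsFreeSeq ((Order.succ κ).ord) p)
    (lam : Cardinal.{u})
    (γ : Ordinal.{u} → Ordinal.{u}) (p : Ordinal.{u} → X)
    (S : Ordinal.{u} → Ordinal.{u} → Set X)
    (hγ : ∀ δ : Ordinal, 0 < δ → γ δ < δ)
    (hb : ∀ α < lam.ord,
      closure (p '' Set.Iio α) ∩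
        (⋃ β ∈ Set.Ico α lam.ord, ⋃ i ∈ Set.Iio κ.ord, closure (S β i)) = ∅)
    (hc : ∀ ε δ : Ordinal, δ = κ.ord * ε → δ ≠ 0 → δ ≤ lam.ord →
      ∀ A : Finset (Ordinal × Ordinal),
        (∀ a ∈ A, γ δ ≤ a.1 ∧ a.1 < δ ∧ a.2 < κ.ord) →
        (⋂ a ∈ A, closure (S a.1 a.2)).Nonempty →
        ((⋂ a ∈ A, closure (S a.1 a.2)) ∩ closure (p '' Set.Iio δ)).Nonempty) :
    ∀ x : X,
      #{a : Ordinal.{u} × Ordinal.{u} | a.1 < lam.ord ∧ a.2 < κ.ord ∧ x ∈ S a.1 a.2}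
        ≤ Cardinal.lift.{u + 1} κ := by
  intro x
  set W := {a : Ordinal.{u} × Ordinal.{u} | a.1 < lam.ord ∧ a.2 < κ.ord ∧ x ∈ S a.1 a.2}
  by_contra! hlarge
  have hsnd : #(Prod.snd '' W) ≤ Cardinal.lift.{u + 1} κ := by
    rw [← card_ord κ, ← Cardinal.mk_Iio_ordinal]
    exact mk_le_mk_of_subset (by rintro _ ⟨w, hw, rfl⟩; exact hw.2.1)
  obtain ⟨a, d, hseq⟩ := exists_interleaved_seq hκ
    (Cardinal.lt_mk_image_fst (aleph0_le_lift.mpr hκ) hsnd hlarge)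
    (L := lam.ord) (by rintro _ ⟨w, hw, rfl⟩; exact hw.1) hγ
  have hindex : ∀ α ∈ Prod.fst '' W, ∃ i, (α, i) ∈ W := by
    rintro _ ⟨⟨α, i⟩, hw, rfl⟩
    exact ⟨i, hw⟩
  choose! i hi using hindex
  have hmemW : ∀ ξ < (Order.succ κ).ord, (a ξ, i (a ξ)) ∈ W := fun ξ hξ => hi _ (hseq ξ hξ).1
  refine hfree (hcomp.exists_isFreeSeq hκ (P := fun δ => closure (p '' Iio δ))
    (fun _ _ h => closure_mono (image_mono (Iio_subset_Iio h))) (fun _ => isClosed_closure)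
    (U := fun ξ => S (a ξ) (i (a ξ))) ?_ ?_ fun ξ hξ => (hseq ξ hξ).2.2.2.1)
  · intro ξ hξ s
    obtain ⟨-, hdL, hε, -, hda⟩ := hseq ξ hξ
    refine biInter_closure_inter_nonempty_of_mem hc hε (pos_of_gt (hda ξ le_rfl).2).ne' hdL
      (x := x) s (fun ζ : Iic ξ => (a ζ, i (a ζ))) fun ζ _ => ?_
    have hζ := hmemW ζ (ζ.2.trans_lt hξ)
    exact ⟨(hda ζ ζ.2).1, (hda ζ ζ.2).2, hζ.2.1, hζ.2.2⟩
  · intro ξ hξ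
    rw [disjoint_iff_inter_eq_empty, ← subset_empty_iff, ← hb (a ξ) (hmemW ξ hξ).1]
    exact inter_subset_inter_right _ fun y hy =>
      mem_biUnion ⟨le_rfl, (hmemW ξ hξ).1⟩ (mem_biUnion (hmemW ξ hξ).2.1 hy)

/-- In a regular initially `κ`-compact space with `πχ(X) = κ` and no free
sequences of length `κ⁺`, every Shapirovskii π-base (given by a regressive
`γ`, a dense left-separated `⟨p_α : α < d(X)⟩` and open `S_{α,i}` satisfying
(a), (b), (c)) is point-`κ`: every point belongs to at most `κ` of the sets
`S_{α,i}`, `α < d(X)`, `i < κ`. -/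
theorem shapirovskii_pi_base_point_kappa (X : Type u) [TopologicalSpace X] [T3Space X]
    (κ : Cardinal.{u}) (hκ : ℵ₀ ≤ κ)
    (hcomp : InitiallyCompact X κ)
    (hπ : piChar X = κ)
    (hfree : ¬ ∃ p : Ordinal.{u} → X, IsFreeSeq ((Order.succ κ).ord) p)
    (lam : Cardinal.{u}) (hlam : lam = density X)
    (γ : Ordinal.{u} → Ordinal.{u}) (p : Ordinal.{u} → X)
    (S : Ordinal.{u} → Ordinal.{u} → Set X)
    (hγ : ∀ δ : Ordinal, 0 < δ → γ δ < δ)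
    (hdense : Dense (p '' Set.Iio lam.ord))
    (hls : ∀ δ < lam.ord, closure (p '' Set.Iio δ) ∩ (p '' Set.Ico δ lam.ord) = ∅)
    (hS : ∀ α < lam.ord, ∀ i < κ.ord, IsOpen (S α i))
    (ha : ∀ α < lam.ord, IsLocalPiBase (p α) {B : Set X | ∃ i < κ.ord, B = S α i})
    (hb : ∀ α < lam.ord,
      closure (p '' Set.Iio α) ∩
        (⋃ β ∈ Set.Ico α lam.ord, ⋃ i ∈ Set.Iio κ.ord, closure (S β i)) = ∅)
    (hc : ∀ ε δ : Ordinal, δ = κ.ord * ε → δ ≠ 0 → δ ≤ lam.ord →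
      ∀ A : Finset (Ordinal × Ordinal),
        (∀ a ∈ A, γ δ ≤ a.1 ∧ a.1 < δ ∧ a.2 < κ.ord) →
        (⋂ a ∈ A, closure (S a.1 a.2)).Nonempty →
        ((⋂ a ∈ A, closure (S a.1 a.2)) ∩ closure (p '' Set.Iio δ)).Nonempty) :
    ∀ x : X,
      #{a : Ordinal.{u} × Ordinal.{u} | a.1 < lam.ord ∧ a.2 < κ.ord ∧ x ∈ S a.1 a.2}
        ≤ Cardinal.lift.{u + 1} κ :=
  shapirovskii_pi_base_point_kappa_general X κ hκ hcomp hfree lam γ p S hγ hb hc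
end

section
/- Let X be a regular space and κ = max{πχ(X), t(X)}. If d(X) ≤ κ⁺, then X has a point-κ π-base. -/
open Cardinal Set

/-- The tightness of `X`: the least cardinal `κ` such that whenever
`x ∈ cl A` there is `B ⊆ A` with `|B| ≤ κ` and `x ∈ cl B`. -/
noncomputable def tightness (X : Type u) [TopologicalSpace X] : Cardinal.{u} :=
  sInf {κ : Cardinal | ∀ (A : Set X) (x : X), x ∈ closure A →
    ∃ B ⊆ A, #B ≤ κ ∧ x ∈ closure B}

def IsPiBase {X : Type u} [TopologicalSpace X] (ℛ : Set (Set X)) : Prop :=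
  (∀ R ∈ ℛ, IsOpen R ∧ R.Nonempty) ∧
  ∀ U : Set X, IsOpen U → U.Nonempty → ∃ R ∈ ℛ, R ⊆ U

/-!
Enumerate a dense set, with repetitions, as `(d_α)_{α < κ⁺}` and keep, for each `α`, the members
of a local π-base at `d_α` of size `≤ πχ(X)` that miss all earlier `d_β`. The first `d_α` falling
in an open set `U` supplies a member inside `U`, so this is a π-base. If `x` lies in such a member
`V` chosen at stage `α`, then `x ∉ cl {d_β : β < α}`; by tightness `x` is in the closure of some
`κ` of the `d_β`, which by regularity of `κ⁺` all come before some `γ < κ⁺`, so only the `< γ`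
stages can contribute members containing `x`: at most `κ · κ = κ` of them. When `κ` is finite, `X`
has a finite dense set, hence is finite and discrete, and the singletons do.
-/

variable {X : Type u} [TopologicalSpace X]

theorem exists_isLocalPiBase_mk_le_piChar (x : X) :
    ∃ ℬ : Set (Set X), IsLocalPiBase x ℬ ∧ #ℬ ≤ piChar X := by
  have hne : {c : Cardinal | ∃ ℬ : Set (Set X), #ℬ = c ∧ IsLocalPiBase x ℬ}.Nonempty :=
    ⟨_, {U | IsOpen U ∧ x ∈ U}, rfl,
      fun B hB => ⟨hB.1, x, hB.2⟩, fun U hU hx => ⟨U, ⟨hU, hx⟩, subset_rfl⟩⟩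
  obtain ⟨ℬ, hcard, hℬ⟩ := csInf_mem hne
  exact ⟨ℬ, hℬ, hcard ▸ le_ciSup bddAbove_of_small x⟩

theorem one_le_piChar [Nonempty X] : 1 ≤ piChar X := by
  obtain ⟨x⟩ := ‹Nonempty X›
  obtain ⟨ℬ, hℬ, hcard⟩ := exists_isLocalPiBase_mk_le_piChar x
  obtain ⟨B, hB, -⟩ := hℬ.2 univ isOpen_univ (mem_univ x)
  exact (Cardinal.one_le_iff_ne_zero.mpr (mk_ne_zero_iff.mpr ⟨⟨B, hB⟩⟩)).trans hcard

theorem exists_subset_mk_le_tightness_mem_closure {A : Set X} {x : X} (hx : x ∈ closure A) :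
    ∃ B ⊆ A, #B ≤ tightness X ∧ x ∈ closure B :=
  csInf_mem (s := {κ : Cardinal | ∀ (A : Set X) (x : X), x ∈ closure A →
    ∃ B ⊆ A, #B ≤ κ ∧ x ∈ closure B})
    ⟨#X, fun A _ hx => ⟨A, subset_rfl, mk_set_le A, hx⟩⟩ A x hx

theorem exists_dense_mk_eq_density : ∃ D : Set X, Dense D ∧ #D = density X :=
  csInf_mem (s := {c : Cardinal | ∃ s : Set X, Dense s ∧ #s = c}) ⟨_, univ, dense_univ, rfl⟩

theorem finite_of_density_lt_aleph0 [T1Space X] (h : density X < ℵ₀) : Finite X := by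
  obtain ⟨D, hD, hcard⟩ := exists_dense_mk_eq_density (X := X)
  have hDfin : D.Finite := lt_aleph0_iff_set_finite.mp (hcard ▸ h)
  rw [← finite_univ_iff, ← hD.closure_eq, hDfin.isClosed.closure_eq]
  exact hDfin

theorem exists_denseRange_of_density_le_mk [Nonempty X] {ι : Type u} (h : density X ≤ #ι) :
    ∃ g : ι → X, DenseRange g := by
  obtain ⟨D, hD, hcard⟩ := exists_dense_mk_eq_density (X := X)
  obtain ⟨e⟩ : Nonempty (D ↪ ι) := le_def _ _ |>.mp (hcard ▸ h)
  have : Nonempty D := hD.nonempty.to_subtype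
  refine ⟨Subtype.val ∘ Function.invFun e, ?_⟩
  rw [DenseRange, (Function.invFun_surjective e.injective).range_comp, Subtype.range_coe]
  exact hD

theorem exists_isPiBase_mk_le_one [DiscreteTopology X] :
    ∃ ℛ : Set (Set X), IsPiBase ℛ ∧ ∀ x : X, #{R : Set X | R ∈ ℛ ∧ x ∈ R} ≤ 1 := by
  refine ⟨range fun x : X => {x}, ⟨?_, ?_⟩, fun x => ?_⟩
  · rintro R ⟨y, rfl⟩
    exact ⟨isOpen_discrete _, singleton_nonempty y⟩
  · rintro U - ⟨y, hy⟩
    exact ⟨{y}, mem_range_self y, singleton_subset_iff.mpr hy⟩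
  · have hsub : {R : Set X | R ∈ range (fun x : X => {x}) ∧ x ∈ R} ⊆ {{x}} := by
      rintro R ⟨⟨y, rfl⟩, rfl⟩
      rfl
    simpa using mk_le_mk_of_subset hsub

theorem exists_forall_lt_of_mk_lt_cof {α : Type u} [LinearOrder α] {s : Set α}
    (h : #s < Order.cof α) : ∃ a, ∀ b ∈ s, b < a := by
  by_contra! hs
  exact (Order.cof_le fun a => hs a).not_gt h

section AvoidingPiBase

variable {ι : Type u} [LinearOrder ι]

def avoidingPiBase (ℬ : X → Set (Set X)) (g : ι → X) : Set (Set X) :=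
  ⋃ i, {V | V ∈ ℬ (g i) ∧ Disjoint V (g '' Iio i)}

theorem isPiBase_avoidingPiBase [WellFoundedLT ι] {ℬ : X → Set (Set X)} {g : ι → X}
    (hℬ : ∀ x, IsLocalPiBase x (ℬ x)) (hg : DenseRange g) : IsPiBase (avoidingPiBase ℬ g) := by
  refine ⟨fun R hR => ?_, fun U hU hUne => ?_⟩
  · obtain ⟨i, hR, -⟩ := mem_iUnion.mp hR
    exact (hℬ (g i)).1 R hR
  · obtain ⟨i, hiU, hmin⟩ := wellFounded_lt.has_min {i | g i ∈ U} (hg.exists_mem_open hU hUne)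
    obtain ⟨V, hV, hVU⟩ := (hℬ (g i)).2 U hU hiU
    refine ⟨V, mem_iUnion.mpr ⟨i, hV, ?_⟩, hVU⟩
    rw [disjoint_left]
    rintro _ hzV ⟨j, hji, rfl⟩
    exact hmin j (hVU hzV) hji

theorem lt_of_disjoint_image_Iio_of_mem_closure {g : ι → X} {V : Set X} {x : X} {i j : ι}
    (hV : IsOpen V) (hVi : Disjoint V (g '' Iio i)) (hxV : x ∈ V)
    (hx : x ∈ closure (g '' Iio j)) : i < j := by
  by_contra! hji
  have hVj : Disjoint V (closure (g '' Iio j)) :=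
    (hVi.mono_right (image_mono (Iio_subset_Iio hji))).closure_right hV
  exact hVj.notMem_of_mem_left hxV hx

theorem exists_mem_closure_image_Iio {g : ι → X} (hcof : tightness X < Order.cof ι)
    (hg : DenseRange g) (x : X) : ∃ j, x ∈ closure (g '' Iio j) := by
  obtain ⟨B, hBg, hB, hxB⟩ := exists_subset_mk_le_tightness_mem_closure (hg x)
  choose f hf using fun b : B => hBg b.2
  obtain ⟨j, hj⟩ := exists_forall_lt_of_mk_lt_cof ((mk_range_le.trans hB).trans_lt hcof)
  refine ⟨j, closure_mono (fun b hb => ?_) hxB⟩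
  exact ⟨f ⟨b, hb⟩, hj _ (mem_range_self _), hf ⟨b, hb⟩⟩

theorem mk_setOf_mem_avoidingPiBase_le {ℬ : X → Set (Set X)} {g : ι → X} {κ : Cardinal}
    {x : X} {j : ι} (hℬ : ∀ x, ∀ V ∈ ℬ x, IsOpen V) (hℬκ : ∀ x, #(ℬ x) ≤ κ) (hκ : ℵ₀ ≤ κ)
    (hj : #(Iio j) ≤ κ) (hx : x ∈ closure (g '' Iio j)) :
    #{R : Set X | R ∈ avoidingPiBase ℬ g ∧ x ∈ R} ≤ κ := by
  have hsub : {R : Set X | R ∈ avoidingPiBase ℬ g ∧ x ∈ R} ⊆ ⋃ i ∈ Iio j, ℬ (g i) := by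
    rintro R ⟨hR, hxR⟩
    obtain ⟨i, hRi, hdisj⟩ := mem_iUnion.mp hR
    exact mem_biUnion (lt_of_disjoint_image_Iio_of_mem_closure (hℬ _ R hRi) hdisj hxR hx) hRi
  calc #{R : Set X | R ∈ avoidingPiBase ℬ g ∧ x ∈ R}
      ≤ #(⋃ i ∈ Iio j, ℬ (g i)) := mk_le_mk_of_subset hsub
    _ ≤ #(Iio j) * ⨆ i : Iio j, #(ℬ (g i)) := mk_biUnion_le _ _
    _ ≤ κ := mul_le_of_le hκ hj (ciSup_le' fun _ => hℬκ _)

end AvoidingPiBase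

/-- If `X` is regular, `κ = max {πχ(X), t(X)}`, and `d(X) ≤ κ⁺`, then `X`
has a point-`κ` π-base. -/
theorem point_kappa_pi_base_of_density_le_succ (X : Type u) [TopologicalSpace X]
    [T3Space X] (κ : Cardinal.{u})
    (hκ : κ = max (piChar X) (tightness X))
    (hd : density X ≤ Order.succ κ) :
    ∃ ℛ : Set (Set X), IsPiBase ℛ ∧ ∀ x : X, #{R : Set X | R ∈ ℛ ∧ x ∈ R} ≤ κ := by
  have hπ : piChar X ≤ κ := hκ ▸ le_max_left _ _
  have ht : tightness X ≤ κ := hκ ▸ le_max_right _ _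
  by_cases hfin : Finite X
  · obtain ⟨ℛ, hℛ, hpt⟩ := exists_isPiBase_mk_le_one (X := X)
    exact ⟨ℛ, hℛ, fun x => (hpt x).trans (have : Nonempty X := ⟨x⟩; one_le_piChar.trans hπ)⟩
  have : Nonempty X := (not_finite_iff_infinite.mp hfin).nonempty
  have hinf : ℵ₀ ≤ κ := not_lt.mp fun h =>
    hfin (finite_of_density_lt_aleph0 (hd.trans_lt (isSuccLimit_aleph0.succ_lt h)))
  let ι := (Order.succ κ).ord.ToType
  obtain ⟨g, hg⟩ : ∃ g : ι → X, DenseRange g :=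
    exists_denseRange_of_density_le_mk (by rwa [mk_ord_toType])
  have hcof : tightness X < Order.cof ι := by
    rw [Ordinal.cof_toType, (isRegular_succ hinf).cof_ord]
    exact ht.trans_lt (Order.lt_succ κ)
  choose ℬ hℬ hℬκ using exists_isLocalPiBase_mk_le_piChar (X := X)
  refine ⟨avoidingPiBase ℬ g, isPiBase_avoidingPiBase hℬ hg, fun x => ?_⟩
  obtain ⟨j, hj⟩ := exists_mem_closure_image_Iio hcof hg x
  have hIio : #(Iio j) < Order.succ κ := by simpa [ι] using mk_Iio_lt j
  exact mk_setOf_mem_avoidingPiBase_le (fun x V hV => ((hℬ x).1 V hV).1)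
    (fun x => (hℬκ x).trans hπ) hinf (Order.lt_succ_iff.mp hIio) hj
end
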